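/- arXiv:0712.1221 — 5 statements merged into one kernel-verified Lean document; each statement's English description precedes it below -/
import Mathlib

section
/- Let μ : ℝ → ℝ be nondecreasing, let q : ℝ² → ℝ, let c ∈ ℝ, and define H(u,v) := μ(u) − c·(q(u,v) − q(u,u)) and the Kruzkov numerical flux Q(u,v,λ) := q(max(u,λ), max(v,λ)) − q(min(u,λ), min(v,λ)). If H is nondecreasing in each of its two arguments, then for all u, v, λ ∈ ℝ: |H(u,v) − μ(λ)| + c·(Q(u,v,λ) − Q(u,u,λ)) ≤ |μ(u) − μ(λ)|. (This is the discrete entropy inequality for Kruzkov entropies, the core of the paper's Lemma 4.1.) -/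
/-- Discrete entropy inequality for Kruzkov entropies: if the one-step scheme
operator `H(u,v) = μ(u) - c (q(u,v) - q(u,u))` is nondecreasing in each argument
and `μ` is nondecreasing, then `|H(u,v) - μ(λ)| + c (Q(u,v,λ) - Q(u,u,λ)) ≤ |μ(u) - μ(λ)|`,
where `Q` is the Kruzkov numerical entropy flux. -/
theorem discrete_entropy_inequality_kruzkov
    (μ : ℝ → ℝ) (hμ : Monotone μ) (q : ℝ → ℝ → ℝ) (c : ℝ)
    (H : ℝ → ℝ → ℝ) (hH : ∀ u v, H u v = μ u - c * (q u v - q u u))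
    (Q : ℝ → ℝ → ℝ → ℝ)
    (hQ : ∀ u v l, Q u v l = q (max u l) (max v l) - q (min u l) (min v l))
    (hH1 : ∀ v, Monotone fun u => H u v)
    (hH2 : ∀ u, Monotone fun v => H u v) :
    ∀ u v l : ℝ, |H u v - μ l| + c * (Q u v l - Q u u l) ≤ |μ u - μ l| := by
  intro u v l
  have hHll : H l l = μ l := by rw [hH l l]; ring
  have hmono : ∀ a b a' b', a ≤ a' → b ≤ b' → H a b ≤ H a' b' := fun a b a' b' h1 h2 =>
    le_trans (hH1 b h1) (hH2 a' h2)
  have h1 : H u v ≤ H (max u l) (max v l) :=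
    hmono _ _ _ _ (le_max_left _ _) (le_max_left _ _)
  have h2 : H l l ≤ H (max u l) (max v l) :=
    hmono _ _ _ _ (le_max_right _ _) (le_max_right _ _)
  have h3 : H (min u l) (min v l) ≤ H u v :=
    hmono _ _ _ _ (min_le_left _ _) (min_le_left _ _)
  have h4 : H (min u l) (min v l) ≤ H l l :=
    hmono _ _ _ _ (min_le_right _ _) (min_le_right _ _)
  have habs : |H u v - μ l| ≤ H (max u l) (max v l) - H (min u l) (min v l) := by
    rw [← hHll, abs_sub_le_iff]; constructor <;> linarith
  have hmu : μ (max u l) - μ (min u l) = |μ u - μ l| := by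
    rcases le_total u l with h | h
    · rw [max_eq_right h, min_eq_left h, abs_sub_comm, abs_of_nonneg (by linarith [hμ h])]
    · rw [max_eq_left h, min_eq_right h, abs_of_nonneg (by linarith [hμ h])]
  have key : H (max u l) (max v l) - H (min u l) (min v l)
      = |μ u - μ l| - c * (Q u v l - Q u u l) := by
    rw [hH, hH, hQ, hQ, ← hmu]; ring
  linarith
end

section
/- Let H : ℝ² → ℝ be nondecreasing in each of its two arguments. Then for all u, v, λ ∈ ℝ: H(max(u,λ), max(v,λ)) − H(min(u,λ), min(v,λ)) ≥ |H(u,v) − H(λ,λ)|. -/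
/-- If `H : ℝ² → ℝ` is nondecreasing in each argument, then
`H(max(u,λ), max(v,λ)) - H(min(u,λ), min(v,λ)) ≥ |H(u,v) - H(λ,λ)|`. -/
theorem monotone_max_min_abs_bound
    (H : ℝ → ℝ → ℝ)
    (hH1 : ∀ v, Monotone fun u => H u v)
    (hH2 : ∀ u, Monotone fun v => H u v) :
    ∀ u v l : ℝ,
      H (max u l) (max v l) - H (min u l) (min v l) ≥ |H u v - H l l| := by
  intro u v l
  have h1 : H u v ≤ H (max u l) (max v l) :=
    le_trans (hH1 v (le_max_left u l)) (hH2 (max u l) (le_max_left v l))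
  have h2 : H l l ≤ H (max u l) (max v l) :=
    le_trans (hH1 l (le_max_right u l)) (hH2 (max u l) (le_max_right v l))
  have h3 : H (min u l) (min v l) ≤ H u v :=
    le_trans (hH1 (min v l) (min_le_left u l)) (hH2 u (min_le_left v l))
  have h4 : H (min u l) (min v l) ≤ H l l :=
    le_trans (hH1 (min v l) (min_le_right u l)) (hH2 l (min_le_right v l))
  rw [ge_iff_le, abs_sub_le_iff]
  constructor <;> linarith
end

section
/- Let m > 0 and let μ : ℝ → ℝ satisfy μ(b) − μ(a) ≥ m·(b − a) for all a ≤ b. Let q : ℝ² → ℝ be nonincreasing in its second argument and Lipschitz continuous in its second argument with constant Λ, i.e. |q(u,v) − q(u,v')| ≤ Λ·|v − v'| for all u, v, v'. Let c ≥ 0 satisfy the CFL-type condition c·Λ ≤ m. Then for all u, v ∈ ℝ: min(μ(u), μ(v)) ≤ μ(u) − c·(q(u,v) − q(u,u)) ≤ max(μ(u), μ(v)); that is, the scheme value H(u,v) := μ(u) − c·(q(u,v) − q(u,u)) is a convex combination of μ(u) and μ(v). -/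
/-- Under the CFL condition `c Λ ≤ m`, the scheme value
`H(u,v) = μ(u) - c (q(u,v) - q(u,u))` lies between `min (μ u) (μ v)` and
`max (μ u) (μ v)`, where `μ` increases at rate at least `m > 0` and `q` is
nonincreasing and `Λ`-Lipschitz in its second argument. -/
theorem scheme_convex_combination
    (m : ℝ) (hm : 0 < m) (μ : ℝ → ℝ)
    (hμ : ∀ a b : ℝ, a ≤ b → m * (b - a) ≤ μ b - μ a)
    (q : ℝ → ℝ → ℝ) (Λ : ℝ)
    (hq_anti : ∀ u : ℝ, Antitone fun v => q u v)
    (hq_lip : ∀ u v v' : ℝ, |q u v - q u v'| ≤ Λ * |v - v'|)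
    (c : ℝ) (hc : 0 ≤ c) (hcfl : c * Λ ≤ m) :
    ∀ u v : ℝ,
      min (μ u) (μ v) ≤ μ u - c * (q u v - q u u) ∧
      μ u - c * (q u v - q u u) ≤ max (μ u) (μ v) := by
  intro u v
  rcases le_total u v with huv | hvu
  · -- u ≤ v : q u v ≤ q u u, so H ≥ μ u; and H ≤ μ v
    have hq : q u v ≤ q u u := hq_anti u huv
    have hμuv : μ u ≤ μ v := by
      have := hμ u v huv
      nlinarith
    have h1 : min (μ u) (μ v) ≤ μ u - c * (q u v - q u u) := by
      have : c * (q u v - q u u) ≤ 0 := mul_nonpos_of_nonneg_of_nonpos hc (by linarith)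
      have := min_le_left (μ u) (μ v)
      linarith
    refine ⟨h1, ?_⟩
    have hlip := hq_lip u u v
    have habs : q u u - q u v ≤ Λ * (v - u) := by
      have h1 : q u u - q u v ≤ |q u u - q u v| := le_abs_self _
      have h2 : |u - v| = v - u := by rw [abs_sub_comm]; exact abs_of_nonneg (by linarith)
      calc q u u - q u v ≤ |q u u - q u v| := h1
        _ = |q u v - q u u| := abs_sub_comm _ _
        _ ≤ Λ * |v - u| := hq_lip u v u
        _ = Λ * |u - v| := by rw [abs_sub_comm]
        _ = Λ * (v - u) := by rw [h2]
    have hΛ : 0 ≤ Λ := by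
      have := hq_lip u 0 1
      have h01 : (0:ℝ) ≤ |q u 0 - q u 1| := abs_nonneg _
      have : |(0:ℝ) - 1| = 1 := by norm_num
      nlinarith [hq_lip u 0 1, abs_nonneg (q u 0 - q u 1)]
    have key : c * (q u u - q u v) ≤ m * (v - u) := by
      calc c * (q u u - q u v) ≤ c * (Λ * (v - u)) :=
            mul_le_mul_of_nonneg_left habs hc
        _ = (c * Λ) * (v - u) := by ring
        _ ≤ m * (v - u) := mul_le_mul_of_nonneg_right hcfl (by linarith)
    have := hμ u v huv
    have : μ u - c * (q u v - q u u) ≤ μ v := by linarith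
    exact this.trans (le_max_right _ _)
  · -- v ≤ u : q u u ≤ q u v, so H ≤ μ u; and H ≥ μ v
    have hq : q u u ≤ q u v := hq_anti u hvu
    have hμvu : μ v ≤ μ u := by
      have := hμ v u hvu
      nlinarith
    have h2 : μ u - c * (q u v - q u u) ≤ max (μ u) (μ v) := by
      have : 0 ≤ c * (q u v - q u u) := mul_nonneg hc (by linarith)
      have := le_max_left (μ u) (μ v)
      linarith
    refine ⟨?_, h2⟩
    have habs : q u v - q u u ≤ Λ * (u - v) := by
      have h2' : |v - u| = u - v := by rw [abs_sub_comm]; exact abs_of_nonneg (by linarith)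
      calc q u v - q u u ≤ |q u v - q u u| := le_abs_self _
        _ = |q u u - q u v| := abs_sub_comm _ _
        _ ≤ Λ * |u - v| := hq_lip u u v
        _ = Λ * (u - v) := by rw [abs_of_nonneg (by linarith : (0:ℝ) ≤ u - v)]
    have key : c * (q u v - q u u) ≤ m * (u - v) := by
      calc c * (q u v - q u u) ≤ c * (Λ * (u - v)) :=
            mul_le_mul_of_nonneg_left habs hc
        _ = (c * Λ) * (u - v) := by ring
        _ ≤ m * (u - v) := mul_le_mul_of_nonneg_right hcfl (by linarith)
    have := hμ v u hvu
    have : μ v ≤ μ u - c * (q u v - q u u) := by linarith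
    exact (min_le_right _ _).trans this
end

section
/- Let U : ℝ → ℝ be twice continuously differentiable with compactly supported second derivative U'', and let g : ℝ → ℝ be continuously differentiable. Then, with U'(±∞) := lim_{λ→±∞} U'(λ), there exists b ∈ ℝ such that for all u ∈ ℝ: (1/2)·∫_ℝ sgn(u − λ)·(g(u) − g(λ))·U''(λ) dλ = ∫₀^u U'(s) g'(s) ds − ((U'(+∞) + U'(−∞))/2)·g(u) + b. -/
/-!
Splitting the line at `u`, the kernel `sgn (u - λ)` integrates an integrable `ψ` to
`2 ∫_{-∞}^u ψ - ∫ ψ`. For `ψ = U''` the fundamental theorem of calculus on half-lines turns this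
into `2 U'(u) - U'(+∞) - U'(-∞)`; for `ψ = U'' g`, integration by parts on `[0, u]` turns
`∫_{-∞}^u U'' g` into `U'(u) g(u) - ∫₀^u U' g'` up to a constant.
-/

open Filter MeasureTheory Set

section SignKernel

variable {ψ : ℝ → ℝ}

theorem eqOn_sign_sub_mul_Iio (u : ℝ) :
    EqOn (fun l => Real.sign (u - l) * ψ l) ψ (Iio u) := fun l hl => by
  simp only [Real.sign_of_pos (sub_pos.2 hl), one_mul]

theorem eqOn_sign_sub_mul_Ioi (u : ℝ) :
    EqOn (fun l => Real.sign (u - l) * ψ l) (-ψ) (Ioi u) := fun l hl => by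
  simp only [Real.sign_of_neg (sub_neg.2 hl), neg_one_mul, Pi.neg_apply]

theorem MeasureTheory.Integrable.sign_sub_mul (hψ : Integrable ψ) (u : ℝ) :
    Integrable (fun l => Real.sign (u - l) * ψ l) := by
  rw [← integrableOn_univ, ← Iic_union_Ioi (a := u), integrableOn_union,
    integrableOn_Iic_iff_integrableOn_Iio]
  exact ⟨hψ.integrableOn.congr_fun (eqOn_sign_sub_mul_Iio u).symm measurableSet_Iio,
    hψ.neg.integrableOn.congr_fun (eqOn_sign_sub_mul_Ioi u).symm measurableSet_Ioi⟩

theorem integral_sign_sub_mul (hψ : Integrable ψ) (u : ℝ) :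
    ∫ l, Real.sign (u - l) * ψ l = 2 * (∫ l in Iic u, ψ l) - ∫ l, ψ l := by
  have hsψ := hψ.sign_sub_mul u
  rw [← intervalIntegral.integral_Iic_add_Ioi hsψ.integrableOn hsψ.integrableOn,
    ← intervalIntegral.integral_Iic_add_Ioi hψ.integrableOn hψ.integrableOn,
    integral_Iic_eq_integral_Iio,
    integral_Iic_eq_integral_Iio (f := ψ),
    setIntegral_congr_fun measurableSet_Iio (eqOn_sign_sub_mul_Iio u),
    setIntegral_congr_fun measurableSet_Ioi (eqOn_sign_sub_mul_Ioi u), Pi.neg_def, integral_neg]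
  ring

end SignKernel

variable {f φ g : ℝ → ℝ} {Lm Lp : ℝ}

theorem integral_sign_sub_mul_of_hasDerivAt (hf : ∀ x, HasDerivAt f (φ x) x)
    (hφ : Integrable φ) (hbot : Tendsto f atBot (nhds Lm)) (htop : Tendsto f atTop (nhds Lp))
    (u : ℝ) : ∫ l, Real.sign (u - l) * φ l = 2 * f u - (Lp + Lm) := by
  rw [integral_sign_sub_mul hφ, integral_Iic_of_hasDerivAt_of_tendsto' (fun x _ => hf x)
    hφ.integrableOn hbot, integral_of_hasDerivAt_of_tendsto hf hφ hbot htop]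
  ring

theorem integral_sign_sub_mul_sub_mul_of_hasDerivAt (hf : ∀ x, HasDerivAt f (φ x) x)
    (hφ : Integrable φ) (hφg : Integrable fun l => φ l * g l)
    (hbot : Tendsto f atBot (nhds Lm)) (htop : Tendsto f atTop (nhds Lp)) (u : ℝ) :
    ∫ l, Real.sign (u - l) * (g u - g l) * φ l
      = (2 * f u - (Lp + Lm)) * g u - 2 * (∫ l in Iic u, φ l * g l) + ∫ l, φ l * g l := by
  have hsplit : (fun l => Real.sign (u - l) * (g u - g l) * φ l)
      = fun l => g u * (Real.sign (u - l) * φ l) - Real.sign (u - l) * (φ l * g l) := by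
    ext l; ring
  rw [hsplit, integral_sub ((hφ.sign_sub_mul u).const_mul _) (hφg.sign_sub_mul u),
    integral_const_mul, integral_sign_sub_mul_of_hasDerivAt hf hφ hbot htop,
    integral_sign_sub_mul hφg]
  ring

/-- Averaging the Kruzkov entropy fluxes `sgn(u - λ)(g(u) - g(λ))` against
`U''(λ)/2` recovers, modulo an affine expression in `g(u)`, the entropy flux
`∫₀ᵘ U'(s) g'(s) ds` of a smooth entropy `U` that is linear at infinity. -/
theorem kruzkov_entropy_flux_reconstruction
    (U : ℝ → ℝ) (hU : ContDiff ℝ 2 U)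
    (hsupp : HasCompactSupport (deriv (deriv U)))
    (g : ℝ → ℝ) (hg : ContDiff ℝ 1 g) :
    ∃ Lp Lm b : ℝ,
      Tendsto (deriv U) atTop (nhds Lp) ∧
      Tendsto (deriv U) atBot (nhds Lm) ∧
      ∀ u : ℝ,
        (1 / 2) * ∫ l : ℝ, Real.sign (u - l) * (g u - g l) * deriv (deriv U) l
          = (∫ s in (0:ℝ)..u, deriv U s * deriv g s)
            - ((Lp + Lm) / 2) * g u + b := by
  have hU' : ContDiff ℝ 1 (deriv U) := hU.deriv' (n := 1)
  have hU'' : ∀ x, HasDerivAt (deriv U) (deriv (deriv U) x) x :=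
    fun x => (hU'.differentiable one_ne_zero x).hasDerivAt
  have hg' : ∀ x, HasDerivAt g (deriv g x) x :=
    fun x => (hg.differentiable one_ne_zero x).hasDerivAt
  have hφ : Integrable (deriv (deriv U)) :=
    hU'.continuous_deriv le_rfl |>.integrable_of_hasCompactSupport hsupp
  have hφg : Integrable fun l => deriv (deriv U) l * g l :=
    (hU'.continuous_deriv le_rfl).mul hg.continuous
      |>.integrable_of_hasCompactSupport hsupp.mul_right
  have htop := tendsto_limUnder_of_hasDerivAt_of_integrableOn_Ioi (a := 0) (fun x _ => hU'' x)
    hφ.integrableOn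
  have hbot := tendsto_limUnder_of_hasDerivAt_of_integrableOn_Iic (a := 0) (fun x _ => hU'' x)
    hφ.integrableOn
  refine ⟨_, _, deriv U 0 * g 0 - (∫ l in Iic 0, deriv (deriv U) l * g l)
    + (1 / 2) * ∫ l, deriv (deriv U) l * g l, htop, hbot, fun u => ?_⟩
  rw [integral_sign_sub_mul_sub_mul_of_hasDerivAt hU'' hφ hφg hbot htop,
    intervalIntegral.integral_mul_deriv_eq_deriv_mul (fun x _ => hU'' x) (fun x _ => hg' x)
      hφ.intervalIntegrable ((hg.continuous_deriv le_rfl).intervalIntegrable _ _),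
    ← intervalIntegral.integral_Iic_sub_Iic hφg.integrableOn hφg.integrableOn]
  ring
end

section
/- Let m > 0 and let μ : ℝ → ℝ be continuous and satisfy μ(b) − μ(a) ≥ m·(b − a) for all a ≤ b (so that μ is a strictly increasing bijection of ℝ whose inverse μ⁻¹ is Lipschitz with constant 1/m). Let q : ℝ² → ℝ be nonincreasing in its second argument and Lipschitz in its second argument with constant Λ, and let c ≥ 0 satisfy c·Λ ≤ m. Then for every u, v, s ∈ ℝ: |μ⁻¹( μ(u) − c·(q(u,v) − q(u,u)) − s )| ≤ max(|u|, |v|) + |s|/m. -/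
/-- One-step `L∞` stability estimate with source term: under the CFL condition
`c Λ ≤ m`, the updated discrete value `μ⁻¹(μ(u) - c (q(u,v) - q(u,u)) - s)`
satisfies `|·| ≤ max(|u|,|v|) + |s|/m`. -/
theorem one_step_Linfty_stability
    (m : ℝ) (hm : 0 < m) (μ : ℝ → ℝ) (hμc : Continuous μ)
    (hμ : ∀ a b : ℝ, a ≤ b → m * (b - a) ≤ μ b - μ a)
    (q : ℝ → ℝ → ℝ) (Λ : ℝ)
    (hq_anti : ∀ u : ℝ, Antitone fun v => q u v)
    (hq_lip : ∀ u v v' : ℝ, |q u v - q u v'| ≤ Λ * |v - v'|)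
    (c : ℝ) (hc : 0 ≤ c) (hcfl : c * Λ ≤ m) :
    ∀ u v s : ℝ,
      |Function.invFun μ (μ u - c * (q u v - q u u) - s)|
        ≤ max |u| |v| + |s| / m := by
  intro u v s
  set M := max |u| |v| with hM
  clear_value M
  have hM0 : 0 ≤ M := by rw [hM]; exact le_trans (abs_nonneg u) (le_max_left _ _)
  have hR0 : 0 ≤ |s| / m := div_nonneg (abs_nonneg s) hm.le
  set B := M + |s| / m with hB
  clear_value B
  have hB0 : 0 ≤ B := by rw [hB]; exact add_nonneg hM0 hR0
  have hAB : -B ≤ B := by linarith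
  have hinj : Function.Injective μ := by
    intro a b hab
    by_contra h
    rcases lt_or_gt_of_ne h with h1 | h1
    · have := hμ a b h1.le
      nlinarith [mul_pos hm (sub_pos.mpr h1)]
    · have := hμ b a h1.le
      nlinarith [mul_pos hm (sub_pos.mpr h1)]
  -- key flux bounds
  have key_up : μ u - c * (q u v - q u u) ≤ μ (max u v) := by
    rcases le_total u v with h | h
    · have h2 : |q u v - q u u| ≤ Λ * |v - u| := hq_lip u v u
      have h1 : q u v ≤ q u u := hq_anti u h
      rw [abs_of_nonpos (by linarith), abs_of_nonneg (by linarith)] at h2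
      have h3 := hμ u v h
      rw [max_eq_right h]
      have e1 : c * (-(q u v - q u u)) ≤ c * (Λ * (v - u)) :=
        mul_le_mul_of_nonneg_left h2 hc
      have e2 : c * Λ * (v - u) ≤ m * (v - u) :=
        mul_le_mul_of_nonneg_right hcfl (by linarith)
      nlinarith
    · have h1 : q u u ≤ q u v := hq_anti u h
      rw [max_eq_left h]
      nlinarith [mul_nonneg hc (sub_nonneg.mpr h1)]
  have key_lo : μ (min u v) ≤ μ u - c * (q u v - q u u) := by
    rcases le_total u v with h | h
    · have h1 : q u v ≤ q u u := hq_anti u h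
      rw [min_eq_left h]
      nlinarith [mul_nonneg hc (sub_nonneg.mpr h1)]
    · have h1 : q u u ≤ q u v := hq_anti u h
      have h2 : |q u v - q u u| ≤ Λ * |v - u| := hq_lip u v u
      rw [abs_of_nonneg (by linarith), abs_of_nonpos (by linarith)] at h2
      have h3 := hμ v u h
      rw [min_eq_right h]
      have e1 : c * (q u v - q u u) ≤ c * (Λ * -(v - u)) :=
        mul_le_mul_of_nonneg_left h2 hc
      have e2 : c * Λ * (u - v) ≤ m * (u - v) :=
        mul_le_mul_of_nonneg_right hcfl (by linarith)
      nlinarith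
  have hmaxM : max u v ≤ M := by rw [hM]; exact max_le_max (le_abs_self u) (le_abs_self v)
  have hminM : -M ≤ min u v := by
    rw [hM]
    exact le_min (neg_le_of_abs_le (le_max_left _ _)) (neg_le_of_abs_le (le_max_right _ _))
  have hsm : m * (|s| / m) = |s| := by field_simp
  set y := μ u - c * (q u v - q u u) - s with hy
  clear_value y
  have hub : y ≤ μ B := by
    have h2 := hμ (max u v) B (by linarith)
    have h3 : m * (|s| / m) ≤ m * (B - max u v) :=
      mul_le_mul_of_nonneg_left (by linarith) hm.le
    have hs : -s ≤ |s| := neg_le_abs s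
    linarith
  have hlb : μ (-B) ≤ y := by
    have h2 := hμ (-B) (min u v) (by linarith)
    have h3 : m * (|s| / m) ≤ m * (min u v - -B) :=
      mul_le_mul_of_nonneg_left (by linarith) hm.le
    have hs : s ≤ |s| := le_abs_self s
    linarith
  obtain ⟨x, hx, hxy⟩ := intermediate_value_Icc hAB hμc.continuousOn ⟨hlb, hub⟩
  have : Function.invFun μ y = x := by
    rw [← hxy, Function.leftInverse_invFun hinj x]
  rw [this]
  have := abs_le.mpr ⟨hx.1, hx.2⟩
  linarith
end
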